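/- Each individual round of the game (a Shape Up round or a Ship Out round) transforms an injective assignment A × Fin 4 → B × Fin 4 into another injective assignment; moreover each round changes the assignment by a swap structure: the set of cards assigned, together with cards remaining in the deck, is permuted. -/

import Mathlib

open Finset

variable {A B : Type*}

/-- The spots of a hand holding a spade (suit `3`). -/
def spadeSpots (h : Fin 4 → B × Fin 4) : Finset (Fin 4) :=
  Finset.univ.filter (fun i => (h i).2 = 3)

/-- Shape Up: swap spot `0` with the least spot holding a spade, if any. -/
def shapeUp (h : Fin 4 → B × Fin 4) : Fin 4 → B × Fin 4 :=
  if hs : (spadeSpots h).Nonempty then h ∘ (Equiv.swap 0 ((spadeSpots h).min' hs)) else h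

/-- Bad spades: spades lying in a spot other than the leftmost spot `0`. -/
def badSpades (h : Fin 4 → B × Fin 4) : Finset (Fin 4) :=
  Finset.univ.filter (fun i => i ≠ 0 ∧ (h i).2 = 3)

/-- The spot of the leftmost bad spade (junk value `0` if there is none). -/
def leftBad (h : Fin 4 → B × Fin 4) : Fin 4 :=
  if hb : (badSpades h).Nonempty then (badSpades h).min' hb else 0

/-- The card a player with a bad spade calls for: its name is the name of the hand
(the name of the leftmost spade, in spot `0`), and its suit is the suit `3 - i`
named by the spot `i` of the leftmost bad spade. -/
def request (h : Fin 4 → B × Fin 4) : B × Fin 4 :=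
  ((h 0).1, 3 - leftBad h)

/-- Ship Out, seen from one hand: replace the leftmost bad spade by the requested card. -/
def shipOutHand (h : Fin 4 → B × Fin 4) : Fin 4 → B × Fin 4 :=
  if (badSpades h).Nonempty then Function.update h (leftBad h) (request h) else h

/-- The hand of player `a` under the global assignment `f`. -/
def hand (f : A × Fin 4 → B × Fin 4) (a : A) : Fin 4 → B × Fin 4 :=
  fun i => f (a, i)

/-- The global Shape Up round: every player shapes up simultaneously. -/
def gShapeUp (f : A × Fin 4 → B × Fin 4) : A × Fin 4 → B × Fin 4 :=
  fun p => shapeUp (hand f p.1) p.2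

/-- A player is active in the Ship Out round if her hand is named
(spade in spot `0`) and contains a bad spade. -/
def isActive (f : A × Fin 4 → B × Fin 4) (a : A) : Prop :=
  (f (a, 0)).2 = 3 ∧ (badSpades (hand f a)).Nonempty

open Classical in
/-- The global Ship Out round: every active player swaps her leftmost bad spade
with the card she calls for, wherever that card is. -/
noncomputable def gShipOut (f : A × Fin 4 → B × Fin 4) : A × Fin 4 → B × Fin 4 :=
  fun p =>
    if isActive f p.1 ∧ p.2 = leftBad (hand f p.1) then request (hand f p.1)
    else if h : ∃ a', isActive f a' ∧ request (hand f a') = f p then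
      f (h.choose, leftBad (hand f h.choose))
    else f p

/-- The game: alternate Shape Up and Ship Out rounds, starting with Shape Up. -/
noncomputable def gameSeq (f : A × Fin 4 → B × Fin 4) : ℕ → (A × Fin 4 → B × Fin 4)
  | 0 => f
  | (k + 1) => if k % 2 = 0 then gShapeUp (gameSeq f k) else gShipOut (gameSeq f k)

open Classical in
/-- The score of a hand: the number of spots `i` holding the card whose name is the
name of the hand and whose suit `3 - i` is the suit named by spot `i`. -/
noncomputable def score (h : Fin 4 → B × Fin 4) : ℕ :=
  (Finset.univ.filter (fun i => h i = ((h 0).1, 3 - i))).card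

/-!
Shape Up only permutes the spots inside each hand, so it is `f` precomposed with a permutation
of `A × Fin 4`, and any such map is `f` postcomposed with a permutation of the deck.

Ship Out swaps, for each active player, her leftmost bad spade with the card she calls. These
transpositions of the deck are disjoint: a bad spade has suit `3` while a called card has suit
`3 - i ≠ 3` (as `i ≠ 0`), and two active players call different cards, because the called card
records the name of the spade in spot `0` and `f` is injective.
-/

open Function

theorem Equiv.Perm.exists_comp_eq_comp {α β : Type*} {f : α → β} (hf : Injective f)
    (τ : Equiv.Perm α) : ∃ σ : Equiv.Perm β, f ∘ τ = σ ∘ f :=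
  ⟨τ.viaEmbedding ⟨f, hf⟩, funext fun p => (τ.viaEmbedding_apply ⟨f, hf⟩ p).symm⟩

section PairSwap

variable {ι α : Type*} {x y : ι → α}

open Classical in
/-- The product of the transpositions `(x i, y i)`; it is a permutation when `x` and `y` are
injective with disjoint ranges. -/
noncomputable def pairSwap (x y : ι → α) (z : α) : α :=
  if h : ∃ i, x i = z then y h.choose
  else if h' : ∃ i, y i = z then x h'.choose
  else z

theorem pairSwap_apply_left (hx : Injective x) (i : ι) : pairSwap x y (x i) = y i := by
  have h : ∃ j, x j = x i := ⟨i, rfl⟩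
  rw [pairSwap, dif_pos h, hx h.choose_spec]

theorem pairSwap_apply_right (hy : Injective y) (hxy : ∀ i j, x i ≠ y j) (i : ι) :
    pairSwap x y (y i) = x i := by
  have hl : ¬ ∃ j, x j = y i := fun ⟨j, hj⟩ => hxy j i hj
  have hr : ∃ j, y j = y i := ⟨i, rfl⟩
  rw [pairSwap, dif_neg hl, dif_pos hr, hy hr.choose_spec]

theorem pairSwap_apply_of_forall_ne {z : α} (hxz : ∀ i, x i ≠ z) (hyz : ∀ i, y i ≠ z) :
    pairSwap x y z = z := by
  rw [pairSwap, dif_neg (fun ⟨i, hi⟩ => hxz i hi), dif_neg (fun ⟨i, hi⟩ => hyz i hi)]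

theorem pairSwap_involutive (hx : Injective x) (hy : Injective y) (hxy : ∀ i j, x i ≠ y j) :
    Involutive (pairSwap x y) := by
  intro z
  by_cases hl : ∃ i, x i = z
  · obtain ⟨i, rfl⟩ := hl
    rw [pairSwap_apply_left hx, pairSwap_apply_right hy hxy]
  by_cases hr : ∃ i, y i = z
  · obtain ⟨i, rfl⟩ := hr
    rw [pairSwap_apply_right hy hxy, pairSwap_apply_left hx]
  push Not at hl hr
  rw [pairSwap_apply_of_forall_ne hl hr, pairSwap_apply_of_forall_ne hl hr]

end PairSwap

def shapeUpSwap (h : Fin 4 → B × Fin 4) : Equiv.Perm (Fin 4) :=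
  if hs : (spadeSpots h).Nonempty then Equiv.swap 0 ((spadeSpots h).min' hs) else 1

theorem shapeUp_eq_comp (h : Fin 4 → B × Fin 4) : shapeUp h = h ∘ shapeUpSwap h := by
  unfold shapeUp shapeUpSwap
  split <;> rfl

theorem gShapeUp_eq_comp (f : A × Fin 4 → B × Fin 4) :
    gShapeUp f = f ∘ Equiv.prodShear (Equiv.refl A) (fun a => shapeUpSwap (hand f a)) := by
  funext p
  simp only [gShapeUp, shapeUp_eq_comp]
  rfl

section ShipOut

variable {f : A × Fin 4 → B × Fin 4} {a b : A}

theorem leftBad_mem_badSpades {h : Fin 4 → B × Fin 4} (hb : (badSpades h).Nonempty) :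
    leftBad h ∈ badSpades h := by
  rw [leftBad, dif_pos hb]
  exact min'_mem _ _

theorem request_snd_ne_three {h : Fin 4 → B × Fin 4} (hb : (badSpades h).Nonempty) :
    (request h).2 ≠ 3 :=
  mt sub_eq_self.mp (mem_filter.mp (leftBad_mem_badSpades hb)).2.1

theorem isActive.leftBad_snd (ha : isActive f a) : (f (a, leftBad (hand f a))).2 = 3 :=
  (mem_filter.mp (leftBad_mem_badSpades ha.2)).2.2

theorem isActive.eq_of_request_eq (hf : Injective f) (ha : isActive f a) (hb : isActive f b)
    (h : request (hand f a) = request (hand f b)) : a = b := by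
  have hname : (request (hand f a)).1 = (request (hand f b)).1 := congrArg Prod.fst h
  have h0 : f (a, 0) = f (b, 0) := Prod.ext hname (ha.1.trans hb.1.symm)
  exact congrArg Prod.fst (hf h0)

def badCard (f : A × Fin 4 → B × Fin 4) (a : {a // isActive f a}) : B × Fin 4 :=
  f (a, leftBad (hand f a))

def calledCard (f : A × Fin 4 → B × Fin 4) (a : {a // isActive f a}) : B × Fin 4 :=
  request (hand f a)

theorem badCard_injective (hf : Injective f) : Injective (badCard f) :=
  fun _ _ h => Subtype.ext (congrArg Prod.fst (hf h))

theorem calledCard_injective (hf : Injective f) : Injective (calledCard f) :=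
  fun a b h => Subtype.ext (a.2.eq_of_request_eq hf b.2 h)

theorem badCard_ne_calledCard (a b : {a // isActive f a}) : badCard f a ≠ calledCard f b :=
  fun h => request_snd_ne_three b.2.2 ((congrArg Prod.snd h).symm.trans a.2.leftBad_snd)

theorem gShipOut_eq_pairSwap_comp (hf : Injective f) :
    gShipOut f = pairSwap (badCard f) (calledCard f) ∘ f := by
  funext p
  obtain ⟨a, i⟩ := p
  by_cases hbad : isActive f a ∧ i = leftBad (hand f a)
  · obtain ⟨ha, rfl⟩ := hbad
    rw [gShipOut, if_pos ⟨ha, rfl⟩, comp_apply]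
    exact (pairSwap_apply_left (y := calledCard f) (badCard_injective hf) ⟨a, ha⟩).symm
  have hnotBad : ∀ c, badCard f c ≠ f (a, i) := by
    rintro ⟨c, hc⟩ hci
    cases hf hci
    exact hbad ⟨hc, rfl⟩
  rw [gShipOut, if_neg hbad, comp_apply]
  split_ifs with hcall
  · obtain ⟨hc, hci⟩ := hcall.choose_spec
    have h := pairSwap_apply_right (calledCard_injective hf) badCard_ne_calledCard
      ⟨hcall.choose, hc⟩
    rw [calledCard, hci] at h
    exact h.symm
  · push Not at hcall
    exact (pairSwap_apply_of_forall_ne hnotBad fun c => hcall c c.2).symm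

end ShipOut

/-- Each round of the game transforms an injective assignment into an injective
assignment; moreover each round acts by a permutation of the deck `B × Fin 4`
(cards in hands together with cards remaining in the deck are permuted). -/
theorem rounds_preserve_injective (f : A × Fin 4 → B × Fin 4)
    (hf : Function.Injective f) :
    Function.Injective (gShapeUp f) ∧ Function.Injective (gShipOut f) ∧
      (∃ σ : Equiv.Perm (B × Fin 4), gShapeUp f = σ ∘ f) ∧
      (∃ σ : Equiv.Perm (B × Fin 4), gShipOut f = σ ∘ f) := by
  obtain ⟨σShape, hShape⟩ := Equiv.Perm.exists_comp_eq_comp hf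
    (Equiv.prodShear (Equiv.refl A) (fun a => shapeUpSwap (hand f a)))
  rw [← gShapeUp_eq_comp] at hShape
  let σShip := (pairSwap_involutive (badCard_injective hf) (calledCard_injective hf)
    badCard_ne_calledCard).toPerm
  have hShip : gShipOut f = σShip ∘ f := gShipOut_eq_pairSwap_comp hf
  exact ⟨hShape ▸ σShape.injective.comp hf, hShip ▸ σShip.injective.comp hf,
    ⟨σShape, hShape⟩, ⟨σShip, hShip⟩⟩
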